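/- arXiv:2602.15880 — 6 statements merged into one kernel-verified Lean document; each statement's English description precedes it below -/
import Mathlib

section
/- Let A ∈ ℝ^{m×n} have restricted isometry constant δ_k of order k. Then for every vector v ∈ ℝⁿ and every index set Γ ⊆ {1,…,n} with |Γ ∪ supp(v)| ≤ k, one has ‖((I − AᵀA)v)_Γ‖₂ ≤ δ_k · ‖v‖₂. -/
/-!
The form `B(x, y) = x ⬝ᵥ (1 - AᵀA) *ᵥ y = x ⬝ᵥ y - Ax ⬝ᵥ Ay` is symmetric, and an RIP constant `δ`
gives `|B(z, z)| ≤ δ ‖z‖²` for every `z` supported in `T = Γ ∪ supp v`. Polarization and rescaling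
upgrade this to `|B(x, y)| ≤ δ ‖x‖ ‖y‖` for `x, y` supported in `T`. For
`u = ((1 - AᵀA) v)_Γ` one has `‖u‖² = B(u, v) ≤ δ ‖u‖ ‖v‖`, and it remains to pass to the infimum
over all RIP constants, a set that is nonempty because `A` is bounded.
-/

open Matrix

/-- The Euclidean (ℓ₂) norm of a vector in ℝ^d. -/
noncomputable def l2 {d : ℕ} (v : Fin d → ℝ) : ℝ := Real.sqrt (∑ i, v i ^ 2)

/-- The restricted isometry constant of order `k` of a matrix `A`: the smallest `δ ≥ 0`
such that `(1 - δ)‖x‖² ≤ ‖Ax‖² ≤ (1 + δ)‖x‖²` for all `k`-sparse vectors `x`. -/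
noncomputable def RIC {m n : ℕ} (A : Matrix (Fin m) (Fin n) ℝ) (k : ℕ) : ℝ :=
  sInf {δ : ℝ | 0 ≤ δ ∧ ∀ x : Fin n → ℝ, (Function.support x).ncard ≤ k →
    (1 - δ) * l2 x ^ 2 ≤ l2 (A *ᵥ x) ^ 2 ∧ l2 (A *ᵥ x) ^ 2 ≤ (1 + δ) * l2 x ^ 2}

lemma l2_eq_norm_toLp {d : ℕ} (x : Fin d → ℝ) : l2 x = ‖WithLp.toLp 2 x‖ := by
  simp [l2, EuclideanSpace.norm_eq]

lemma l2_nonneg {d : ℕ} (x : Fin d → ℝ) : 0 ≤ l2 x := Real.sqrt_nonneg _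

lemma l2_sq {d : ℕ} (x : Fin d → ℝ) : l2 x ^ 2 = x ⬝ᵥ x := by
  rw [l2, Real.sq_sqrt (Finset.sum_nonneg fun i _ => sq_nonneg _)]
  simp [dotProduct, sq]

lemma l2_pos {d : ℕ} {x : Fin d → ℝ} (hx : x ≠ 0) : 0 < l2 x := by
  rw [l2_eq_norm_toLp]; simpa using hx

lemma l2_smul {d : ℕ} (c : ℝ) (x : Fin d → ℝ) : l2 (c • x) = |c| * l2 x := by
  rw [l2_eq_norm_toLp, l2_eq_norm_toLp, WithLp.toLp_smul, norm_smul, Real.norm_eq_abs]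

lemma exists_l2_mulVec_le {m n : ℕ} (A : Matrix (Fin m) (Fin n) ℝ) :
    ∃ C : ℝ, ∀ x, l2 (A *ᵥ x) ≤ C * l2 x := by
  let f := LinearMap.toContinuousLinearMap (Matrix.toEuclideanLin A)
  refine ⟨‖f‖, fun x => ?_⟩
  simpa [l2_eq_norm_toLp, f] using f.le_opNorm (WithLp.toLp 2 x)

lemma dotProduct_one_sub_transpose_mul_mulVec {m n : ℕ} (A : Matrix (Fin m) (Fin n) ℝ)
    (x y : Fin n → ℝ) : x ⬝ᵥ (1 - Aᵀ * A) *ᵥ y = x ⬝ᵥ y - A *ᵥ x ⬝ᵥ A *ᵥ y := by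
  rw [sub_mulVec, one_mulVec, dotProduct_sub, ← mulVec_mulVec, dotProduct_mulVec,
    vecMul_transpose]

lemma abs_dotProduct_mulVec_le_half_add_of_isSymm {n : ℕ} {M : Matrix (Fin n) (Fin n) ℝ}
    (hM : M.IsSymm) {T : Set (Fin n)} {δ : ℝ}
    (hT : ∀ z, Function.support z ⊆ T → |z ⬝ᵥ M *ᵥ z| ≤ δ * l2 z ^ 2)
    {x y : Fin n → ℝ} (hx : Function.support x ⊆ T) (hy : Function.support y ⊆ T) :
    |x ⬝ᵥ M *ᵥ y| ≤ δ / 2 * (l2 x ^ 2 + l2 y ^ 2) := by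
  have hyx : y ⬝ᵥ M *ᵥ x = x ⬝ᵥ M *ᵥ y := by
    rw [dotProduct_mulVec, ← mulVec_transpose, hM.eq, dotProduct_comm]
  have polarization : (x + y) ⬝ᵥ M *ᵥ (x + y) - (x - y) ⬝ᵥ M *ᵥ (x - y) = 4 * (x ⬝ᵥ M *ᵥ y) := by
    simp only [mulVec_add, mulVec_sub, dotProduct_add, dotProduct_sub, add_dotProduct,
      sub_dotProduct, hyx]
    ring
  have parallelogram : l2 (x + y) ^ 2 + l2 (x - y) ^ 2 = 2 * (l2 x ^ 2 + l2 y ^ 2) := by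
    simp only [l2_sq, dotProduct_add, dotProduct_sub, add_dotProduct, sub_dotProduct,
      dotProduct_comm y x]
    ring
  have hxy := Set.union_subset hx hy
  obtain ⟨hadd₁, hadd₂⟩ := abs_le.mp (hT (x + y) ((Function.support_add x y).trans hxy))
  obtain ⟨hsub₁, hsub₂⟩ := abs_le.mp (hT (x - y) ((Function.support_sub x y).trans hxy))
  have hparallelogram := congrArg (δ * ·) parallelogram
  simp only [mul_add] at hparallelogram
  rw [abs_le]
  constructor <;> linarith

lemma abs_dotProduct_mulVec_le_of_isSymm {n : ℕ} {M : Matrix (Fin n) (Fin n) ℝ}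
    (hM : M.IsSymm) {T : Set (Fin n)} {δ : ℝ}
    (hT : ∀ z, Function.support z ⊆ T → |z ⬝ᵥ M *ᵥ z| ≤ δ * l2 z ^ 2)
    {x y : Fin n → ℝ} (hx : Function.support x ⊆ T) (hy : Function.support y ⊆ T) :
    |x ⬝ᵥ M *ᵥ y| ≤ δ * l2 x * l2 y := by
  rcases eq_or_ne x 0 with rfl | hx0
  · simp [l2]
  rcases eq_or_ne y 0 with rfl | hy0
  · simp [l2]
  have hpos : 0 < l2 x * l2 y := mul_pos (l2_pos hx0) (l2_pos hy0)
  -- rescale so that both vectors have norm `l2 x * l2 y`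
  have key := abs_dotProduct_mulVec_le_half_add_of_isSymm hM hT
    ((Function.support_const_smul_subset (l2 y) x).trans hx)
    ((Function.support_const_smul_subset (l2 x) y).trans hy)
  rw [smul_dotProduct, mulVec_smul, dotProduct_smul, smul_smul, smul_eq_mul, abs_mul,
    l2_smul, l2_smul, abs_of_nonneg (l2_nonneg x), abs_of_nonneg (l2_nonneg y),
    mul_comm (l2 y), abs_of_pos hpos] at key
  refine le_of_mul_le_mul_left ?_ hpos
  nlinarith

def IsRIPConstant {m n : ℕ} (A : Matrix (Fin m) (Fin n) ℝ) (k : ℕ) (δ : ℝ) : Prop :=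
  0 ≤ δ ∧ ∀ x : Fin n → ℝ, (Function.support x).ncard ≤ k →
    (1 - δ) * l2 x ^ 2 ≤ l2 (A *ᵥ x) ^ 2 ∧ l2 (A *ᵥ x) ^ 2 ≤ (1 + δ) * l2 x ^ 2

lemma RIC_eq_sInf {m n : ℕ} (A : Matrix (Fin m) (Fin n) ℝ) (k : ℕ) :
    RIC A k = sInf {δ | IsRIPConstant A k δ} := rfl

lemma exists_isRIPConstant {m n : ℕ} (A : Matrix (Fin m) (Fin n) ℝ) (k : ℕ) :
    ∃ δ, IsRIPConstant A k δ := by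
  obtain ⟨C, hC⟩ := exists_l2_mulVec_le A
  refine ⟨1 + C ^ 2, by positivity, fun x _ => ⟨?_, ?_⟩⟩
  · nlinarith [sq_nonneg (l2 (A *ᵥ x)), sq_nonneg (l2 x), sq_nonneg C]
  · have h := pow_le_pow_left₀ (l2_nonneg _) (hC x) 2
    nlinarith [sq_nonneg (l2 x)]

namespace IsRIPConstant

variable {m n k : ℕ} {A : Matrix (Fin m) (Fin n) ℝ} {δ : ℝ}

lemma abs_dotProduct_mulVec_self_le (h : IsRIPConstant A k δ) {x : Fin n → ℝ}
    (hx : (Function.support x).ncard ≤ k) :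
    |x ⬝ᵥ (1 - Aᵀ * A) *ᵥ x| ≤ δ * l2 x ^ 2 := by
  obtain ⟨hlo, hhi⟩ := h.2 x hx
  rw [dotProduct_one_sub_transpose_mul_mulVec, ← l2_sq, ← l2_sq, abs_le]
  constructor <;> linarith

lemma l2_indicator_le (h : IsRIPConstant A k δ) {v : Fin n → ℝ} {Γ : Set (Fin n)}
    (hΓ : (Γ ∪ Function.support v).ncard ≤ k) :
    l2 (Γ.indicator ((1 - Aᵀ * A) *ᵥ v)) ≤ δ * l2 v := by
  set w := (1 - Aᵀ * A) *ᵥ v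
  set u := Γ.indicator w
  have hM : (1 - Aᵀ * A).IsSymm := by
    simp [Matrix.IsSymm, Matrix.transpose_sub, Matrix.transpose_mul]
  have hT : ∀ z, Function.support z ⊆ Γ ∪ Function.support v →
      |z ⬝ᵥ (1 - Aᵀ * A) *ᵥ z| ≤ δ * l2 z ^ 2 := fun z hz =>
    h.abs_dotProduct_mulVec_self_le ((Set.ncard_le_ncard hz (Set.toFinite _)).trans hΓ)
  have hbound : |u ⬝ᵥ w| ≤ δ * l2 u * l2 v :=
    abs_dotProduct_mulVec_le_of_isSymm hM hT
      (Set.support_indicator_subset.trans Set.subset_union_left) Set.subset_union_right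
  have huw : u ⬝ᵥ w = l2 u ^ 2 := by
    rw [l2_sq]
    refine Finset.sum_congr rfl fun i _ => ?_
    by_cases hi : i ∈ Γ <;> simp [u, hi]
  rw [huw, abs_of_nonneg (sq_nonneg _)] at hbound
  nlinarith [l2_nonneg u, mul_nonneg h.1 (l2_nonneg v)]

end IsRIPConstant

/-- For any `v ∈ ℝⁿ` and any index set `Γ` with `|Γ ∪ supp v| ≤ k`,
`‖((I - AᵀA)v)_Γ‖₂ ≤ δ_k ‖v‖₂`. -/
theorem stmt1 {m n k : ℕ} (A : Matrix (Fin m) (Fin n) ℝ)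
    (v : Fin n → ℝ) (Γ : Set (Fin n)) (hΓ : (Γ ∪ Function.support v).ncard ≤ k) :
    l2 (Γ.indicator ((1 - Aᵀ * A) *ᵥ v)) ≤ RIC A k * l2 v := by
  obtain ⟨δ₀, hδ₀⟩ := exists_isRIPConstant A k
  rw [RIC_eq_sInf, mul_comm, ← smul_eq_mul, ← Real.sInf_smul_of_nonneg (l2_nonneg v)]
  refine le_csInf (Set.Nonempty.smul_set ⟨δ₀, hδ₀⟩) ?_
  rintro _ ⟨δ, hδ, rfl⟩
  simpa only [smul_eq_mul, mul_comm] using hδ.l2_indicator_le hΓ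
end

section
/- For any vector u ∈ ℝⁿ and any k-sparse vector x ∈ ℝⁿ, one has ‖H_k(u) − x‖₂ ≤ φ · ‖(u − x)_Ω‖₂, where Ω := supp(H_k(u)) ∪ supp(x) and φ = (√5 + 1)/2 is the golden ratio. -/
open Matrix

/-- Minkowski / triangle inequality for finite ℓ₂ sums. -/
lemma sqrt_sum_sq_add_le {ι : Type*} (s : Finset ι) (p q : ι → ℝ) :
    Real.sqrt (∑ i ∈ s, (p i + q i) ^ 2) ≤
      Real.sqrt (∑ i ∈ s, p i ^ 2) + Real.sqrt (∑ i ∈ s, q i ^ 2) := by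
  have hp : (0:ℝ) ≤ ∑ i ∈ s, p i ^ 2 := Finset.sum_nonneg fun i _ => sq_nonneg _
  have hq : (0:ℝ) ≤ ∑ i ∈ s, q i ^ 2 := Finset.sum_nonneg fun i _ => sq_nonneg _
  have cs := Real.sum_mul_le_sqrt_mul_sqrt s p q
  have key : ∑ i ∈ s, (p i + q i) ^ 2 ≤
      (Real.sqrt (∑ i ∈ s, p i ^ 2) + Real.sqrt (∑ i ∈ s, q i ^ 2)) ^ 2 := by
    have h1 : ∑ i ∈ s, (p i + q i) ^ 2 =
        (∑ i ∈ s, p i ^ 2) + 2 * (∑ i ∈ s, p i * q i) + ∑ i ∈ s, q i ^ 2 := by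
      rw [Finset.mul_sum, ← Finset.sum_add_distrib, ← Finset.sum_add_distrib]
      exact Finset.sum_congr rfl fun i _ => by ring
    rw [h1]
    have h2 := Real.sq_sqrt hp
    have h3 := Real.sq_sqrt hq
    nlinarith [cs]
  calc Real.sqrt (∑ i ∈ s, (p i + q i) ^ 2)
      ≤ Real.sqrt ((Real.sqrt (∑ i ∈ s, p i ^ 2) + Real.sqrt (∑ i ∈ s, q i ^ 2)) ^ 2) :=
        Real.sqrt_le_sqrt key
    _ = _ := Real.sqrt_sq (by positivity)

/-- For any `u ∈ ℝⁿ` and any `k`-sparse `x ∈ ℝⁿ`, `‖H_k(u) - x‖₂ ≤ φ ‖(u - x)_Ω‖₂`,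
where `H_k(u)` is any hard-thresholded version of `u` (keeping `k` largest-in-magnitude
entries, i.e. `H_k(u) = u_T` for an index set `T` of `k` largest-in-magnitude entries,
ties broken arbitrarily), `Ω = supp(H_k(u)) ∪ supp(x)`, and `φ = (√5 + 1)/2`. -/
theorem stmt3 {n k : ℕ} (u x : Fin n → ℝ) (hx : (Function.support x).ncard ≤ k)
    (T : Set (Fin n)) (hTcard : T.ncard = min k n)
    (hT : ∀ i ∈ T, ∀ j ∉ T, |u j| ≤ |u i|) :
    l2 (T.indicator u - x) ≤ (Real.sqrt 5 + 1) / 2 *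
      l2 ((Function.support (T.indicator u) ∪ Function.support x).indicator (u - x)) := by
  classical
  set S : Set (Fin n) := Function.support x with hS
  have hTfin : T.Finite := Set.toFinite _
  have hSfin : S.Finite := Set.toFinite _
  set Tf : Finset (Fin n) := hTfin.toFinset with hTf
  set Sf : Finset (Fin n) := hSfin.toFinset with hSf
  have hmemT : ∀ i, i ∈ Tf ↔ i ∈ T := fun i => hTfin.mem_toFinset
  have hmemS : ∀ i, i ∈ Sf ↔ i ∈ S := fun i => hSfin.mem_toFinset
  have hxz : ∀ i, i ∉ Sf → x i = 0 := by
    intro i hi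
    by_contra h
    exact hi ((hmemS i).2 h)
  -- abbreviations
  set A : ℝ := ∑ i ∈ Tf, (u i - x i) ^ 2 with hA
  set B : ℝ := ∑ i ∈ Sf \ Tf, (u i - x i) ^ 2 with hB
  set C : ℝ := ∑ i ∈ Sf \ Tf, (x i) ^ 2 with hC
  have hA0 : 0 ≤ A := Finset.sum_nonneg fun i _ => sq_nonneg _
  have hB0 : 0 ≤ B := Finset.sum_nonneg fun i _ => sq_nonneg _
  -- Step 1 : LHS = sqrt (A + C)
  have hLHS : l2 (T.indicator u - x) = Real.sqrt (A + C) := by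
    unfold l2
    congr 1
    rw [← Finset.sum_filter_add_sum_filter_not Finset.univ (· ∈ Tf)]
    congr 1
    · rw [show Finset.univ.filter (· ∈ Tf) = Tf by simp]
      apply Finset.sum_congr rfl
      intro i hi
      have : i ∈ T := (hmemT i).1 hi
      simp [Set.indicator_of_mem this]
    · rw [hC]
      rw [← Finset.sum_subset (s₁ := Sf \ Tf)
          (h := by intro i hi; simp only [Finset.mem_filter, Finset.mem_univ, true_and]
                   exact (Finset.mem_sdiff.1 hi).2)]
      · apply Finset.sum_congr rfl
        intro i hi
        have hiT : i ∉ T := fun h => (Finset.mem_sdiff.1 hi).2 ((hmemT i).2 h)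
        rw [Pi.sub_apply, Set.indicator_of_notMem hiT]
        ring
      · intro i hi hni
        have hiT : i ∉ Tf := by simpa using (Finset.mem_filter.1 hi).2
        have hiS : i ∉ Sf := fun h => hni (Finset.mem_sdiff.2 ⟨h, hiT⟩)
        have : x i = 0 := hxz i hiS
        have hiT' : i ∉ T := fun h => hiT ((hmemT i).2 h)
        simp [Set.indicator_of_notMem hiT', this]
  -- Step 2 : RHS inner = sqrt (A + B)
  have hRHS : l2 ((Function.support (T.indicator u) ∪ Function.support x).indicator (u - x))
      = Real.sqrt (A + B) := by
    unfold l2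
    congr 1
    set Ω : Set (Fin n) := Function.support (T.indicator u) ∪ Function.support x with hΩ
    have hΩfin : Ω.Finite := Set.toFinite _
    have h1 : ∑ i, (Ω.indicator (u - x) i) ^ 2 = ∑ i ∈ hΩfin.toFinset, (u i - x i) ^ 2 := by
      rw [← Finset.sum_subset (Finset.subset_univ hΩfin.toFinset)]
      · apply Finset.sum_congr rfl
        intro i hi
        have : i ∈ Ω := hΩfin.mem_toFinset.1 hi
        simp [Set.indicator_of_mem this]
      · intro i _ hni
        have : i ∉ Ω := fun h => hni (hΩfin.mem_toFinset.2 h)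
        simp [Set.indicator_of_notMem this]
    rw [h1]
    have hsub : hΩfin.toFinset ⊆ Tf ∪ Sf := by
      intro i hi
      rcases hΩfin.mem_toFinset.1 hi with h | h
      · have : i ∈ T := by
          by_contra hiT
          exact h (Set.indicator_of_notMem hiT u)
        exact Finset.mem_union_left _ ((hmemT i).2 this)
      · exact Finset.mem_union_right _ ((hmemS i).2 h)
    rw [Finset.sum_subset hsub]
    · rw [← Finset.union_sdiff_self_eq_union, Finset.sum_union Finset.disjoint_sdiff]
    · intro i hi hni
      have hiS : i ∉ S := fun h => hni (hΩfin.mem_toFinset.2 (Or.inr h))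
      have hx0 : x i = 0 := by by_contra h; exact hiS h
      have hiT : i ∈ T := by
        rcases Finset.mem_union.1 hi with h | h
        · exact (hmemT i).1 h
        · exact absurd ((hmemS i).1 h) hiS
      have hu0 : u i = 0 := by
        by_contra h
        exact hni (hΩfin.mem_toFinset.2 (Or.inl (by
          rw [Function.mem_support, Set.indicator_of_mem hiT]; exact h)))
      simp [hx0, hu0]
  -- Step 3 : cardinalities
  have hcardT : Tf.card = min k n := by
    rw [← Set.ncard_eq_toFinset_card T hTfin, hTcard]
  have hcardS : Sf.card ≤ min k n := by
    refine le_min ?_ ?_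
    · have h := Set.ncard_eq_toFinset_card S hSfin
      rw [← h]; exact hx
    · calc Sf.card ≤ Finset.univ.card := Finset.card_le_univ _
        _ = n := by simp
  have hcard : (Sf \ Tf).card ≤ (Tf \ Sf).card := by
    have h1 := Finset.card_sdiff_add_card_inter Sf Tf
    have h2 := Finset.card_sdiff_add_card_inter Tf Sf
    have h3 : (Sf ∩ Tf).card = (Tf ∩ Sf).card := by rw [Finset.inter_comm]
    omega
  -- Step 4 : ∑_{Sf\Tf} u² ≤ ∑_{Tf\Sf} u²
  have hU : ∑ i ∈ Sf \ Tf, u i ^ 2 ≤ ∑ i ∈ Tf \ Sf, u i ^ 2 := by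
    rcases Finset.eq_empty_or_nonempty (Tf \ Sf) with he | hne
    · have : (Sf \ Tf).card = 0 := by rw [he] at hcard; simpa using hcard
      have h0 : Sf \ Tf = ∅ := Finset.card_eq_zero.1 this
      rw [h0, he]
    · set m : ℝ := (Tf \ Sf).inf' hne (fun i => u i ^ 2) with hm
      have hm0 : 0 ≤ m := Finset.le_inf' hne _ (fun i _ => sq_nonneg _)
      have hjm : ∀ j ∈ Sf \ Tf, u j ^ 2 ≤ m := by
        intro j hj
        refine Finset.le_inf' hne _ (fun i hi => ?_)
        have hiT : i ∈ T := (hmemT i).1 (Finset.mem_sdiff.1 hi).1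
        have hjT : j ∉ T := fun h => (Finset.mem_sdiff.1 hj).2 ((hmemT j).2 h)
        have habs := hT i hiT j hjT
        calc u j ^ 2 = |u j| ^ 2 := (sq_abs _).symm
          _ ≤ |u i| ^ 2 := by
              exact pow_le_pow_left₀ (abs_nonneg _) habs 2
          _ = u i ^ 2 := sq_abs _
      calc ∑ i ∈ Sf \ Tf, u i ^ 2 ≤ (Sf \ Tf).card • m :=
            Finset.sum_le_card_nsmul _ _ _ hjm
        _ ≤ (Tf \ Sf).card • m := nsmul_le_nsmul_left hm0 hcard
        _ ≤ ∑ i ∈ Tf \ Sf, u i ^ 2 :=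
            Finset.card_nsmul_le_sum _ _ _ (fun i hi => Finset.inf'_le _ hi)
  have hUA : ∑ i ∈ Sf \ Tf, u i ^ 2 ≤ A := by
    refine hU.trans ?_
    have heq : ∑ i ∈ Tf \ Sf, u i ^ 2 = ∑ i ∈ Tf \ Sf, (u i - x i) ^ 2 := by
      apply Finset.sum_congr rfl
      intro i hi
      rw [hxz i (Finset.mem_sdiff.1 hi).2, sub_zero]
    rw [heq, hA]
    exact Finset.sum_le_sum_of_subset_of_nonneg (Finset.sdiff_subset)
      (fun i _ _ => sq_nonneg _)
  -- Step 5 : sqrt C ≤ sqrt A + sqrt B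
  have hCs : Real.sqrt C ≤ Real.sqrt A + Real.sqrt B := by
    have h1 : C = ∑ i ∈ Sf \ Tf, (u i + (x i - u i)) ^ 2 := by
      apply Finset.sum_congr rfl; intro i _; ring_nf
    have h2 := sqrt_sum_sq_add_le (Sf \ Tf) u (fun i => x i - u i)
    rw [← h1] at h2
    have h3 : ∑ i ∈ Sf \ Tf, (x i - u i) ^ 2 = B := by
      apply Finset.sum_congr rfl; intro i _; ring
    rw [h3] at h2
    refine h2.trans (add_le_add_left ?_ _)
    exact Real.sqrt_le_sqrt hUA
  -- Step 6 : final algebra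
  have hC0 : 0 ≤ C := Finset.sum_nonneg fun i _ => sq_nonneg _
  rw [hLHS, hRHS]
  clear_value A B C
  clear hA hB hC hU hUA
  set a := Real.sqrt A with ha
  set b := Real.sqrt B with hb
  have ha2 : a ^ 2 = A := Real.sq_sqrt hA0
  have hb2 : b ^ 2 = B := Real.sq_sqrt hB0
  have ha0 : 0 ≤ a := Real.sqrt_nonneg _
  have hb0 : 0 ≤ b := Real.sqrt_nonneg _
  clear_value a b
  have hCle : C ≤ (a + b) ^ 2 := by
    calc C = Real.sqrt C ^ 2 := (Real.sq_sqrt hC0).symm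
      _ ≤ (a + b) ^ 2 := pow_le_pow_left₀ (Real.sqrt_nonneg _) hCs 2
  have s5 : Real.sqrt 5 ^ 2 = 5 := Real.sq_sqrt (by norm_num)
  have s50 : 0 ≤ Real.sqrt 5 := Real.sqrt_nonneg _
  have s51 : 1 ≤ Real.sqrt 5 := by nlinarith
  have hkey : A + C ≤ ((Real.sqrt 5 + 1) / 2) ^ 2 * (A + B) := by
    rw [← ha2, ← hb2]
    have key2 : ((Real.sqrt 5 + 1) / 2) ^ 2 * (a ^ 2 + b ^ 2) - (a ^ 2 + (a + b) ^ 2)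
        = (Real.sqrt 5 - 1) / 8 * (2 * a - (Real.sqrt 5 + 1) * b) ^ 2 := by
      linear_combination (a ^ 2 / 4 + a * b / 2 - (Real.sqrt 5 - 1) * b ^ 2 / 8) * s5
    have hpos : 0 ≤ (Real.sqrt 5 - 1) / 8 * (2 * a - (Real.sqrt 5 + 1) * b) ^ 2 :=
      mul_nonneg (by linarith) (sq_nonneg _)
    linarith [hCle]
  calc Real.sqrt (A + C) ≤ Real.sqrt (((Real.sqrt 5 + 1) / 2) ^ 2 * (A + B)) :=
        Real.sqrt_le_sqrt hkey
    _ = (Real.sqrt 5 + 1) / 2 * Real.sqrt (A + B) := by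
        rw [Real.sqrt_mul (by positivity), Real.sqrt_sq (by positivity)]
end

section
/- Let x ∈ ℝⁿ be a nonnegative k-sparse vector and let u ∈ ℝⁿ be arbitrary. Then ‖H_k(u⁺) − x‖₂ ≤ φ · ‖(u − x)_Ω‖₂, where Ω := supp(H_k(u⁺)) ∪ supp(x), u⁺ is the componentwise positive part of u, and φ = (√5 + 1)/2 is the golden ratio. -/
/-!
Write `a = u⁺` and let `S ⊇ supp x` with `|S| ≤ |T|`. Split `‖a_T - x‖²` over `T` and `S \ T`. On `T`
the error is `(a - x)²`. On `S \ T` it is `x²`, and `x² ≤ φ a² + φ² (a - x)²` because the difference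
is `φ (φ a - x)²`. Since `|S \ T| ≤ |T \ S|` and `T` collects the largest entries of `a`, the mass
`∑_{S \ T} a²` is at most `∑_{T \ S} a² = ∑_{T \ S} (a - x)²`, so the total is at most
`(1 + φ) ∑_T (a - x)² + φ² ∑_{S \ T} (a - x)²`, and `1 + φ = φ²`. Finally, `u ↦ u⁺` is the projection
onto the nonnegative orthant, which contains `x`, so `(u⁺ - x)² ≤ (u - x)²` entrywise.
-/

open Finset Real goldenRatio

namespace Finset

variable {ι M : Type*} [DecidableEq ι] [AddCommMonoid M] [LinearOrder M] [IsOrderedAddMonoid M]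

theorem sum_sdiff_le_sum_sdiff_of_forall_le {s t : Finset ι} {f : ι → M} (hf : ∀ i, 0 ≤ f i)
    (hcard : #s ≤ #t) (hdom : ∀ i ∈ t, ∀ j ∉ t, f j ≤ f i) :
    ∑ j ∈ s \ t, f j ≤ ∑ i ∈ t \ s, f i := by
  have hsdiff : #(s \ t) ≤ #(t \ s) := card_sdiff_le_card_sdiff_iff.mpr hcard
  rcases (t \ s).eq_empty_or_nonempty with hempty | hne
  · rw [hempty, card_empty, Nat.le_zero, card_eq_zero] at hsdiff
    simp [hsdiff, hempty]
  obtain ⟨i₀, hi₀, hmin⟩ := exists_min_image (t \ s) f hne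
  calc ∑ j ∈ s \ t, f j
      ≤ #(s \ t) • f i₀ :=
        sum_le_card_nsmul _ _ _ fun j hj => hdom i₀ (mem_sdiff.mp hi₀).1 j (mem_sdiff.mp hj).2
    _ ≤ #(t \ s) • f i₀ := nsmul_le_nsmul_left (hf i₀) hsdiff
    _ ≤ ∑ i ∈ t \ s, f i := card_nsmul_le_sum _ _ _ hmin

end Finset

theorem sq_le_goldenRatio_mul_sq_add_goldenRatio_sq_mul (a x : ℝ) :
    x ^ 2 ≤ φ * a ^ 2 + φ ^ 2 * (a - x) ^ 2 := by
  have hφ : φ * a ^ 2 + φ ^ 2 * (a - x) ^ 2 - x ^ 2 = φ * (φ * a - x) ^ 2 := by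
    linear_combination (x ^ 2 - φ * a ^ 2) * goldenRatio_sq
  linarith [mul_nonneg goldenRatio_pos.le (sq_nonneg (φ * a - x))]

section HardThresholding

variable {ι : Type*} [Fintype ι] [DecidableEq ι]

theorem sum_sq_indicator_sub_eq {a x : ι → ℝ} {S T : Finset ι} (hx : ∀ i ∉ S, x i = 0) :
    ∑ i, ((T : Set ι).indicator a i - x i) ^ 2 =
      ∑ i ∈ T, (a i - x i) ^ 2 + ∑ i ∈ S \ T, x i ^ 2 := by
  rw [← sum_add_sum_compl T]
  congr 1
  · exact sum_congr rfl fun i hi => by rw [Set.indicator_of_mem (mem_coe.mpr hi)]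
  · have hsub : S \ T ⊆ Tᶜ := fun i hi => mem_compl.mpr (mem_sdiff.mp hi).2
    rw [← sum_subset hsub]
    · refine sum_congr rfl fun i hi => ?_
      rw [Set.indicator_of_notMem (by simpa using (mem_sdiff.mp hi).2), zero_sub, neg_sq]
    · intro i hiT hiST
      have hiS : i ∉ S := fun hiS => hiST (mem_sdiff.mpr ⟨hiS, mem_compl.mp hiT⟩)
      rw [Set.indicator_of_notMem (by simpa using mem_compl.mp hiT), hx i hiS]
      simp

theorem sum_sq_indicator_sub_le_goldenRatio_sq_mul {a x : ι → ℝ} {S T : Finset ι}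
    (hx : ∀ i ∉ S, x i = 0) (hcard : #S ≤ #T) (hT : ∀ i ∈ T, ∀ j ∉ T, |a j| ≤ |a i|) :
    ∑ i, ((T : Set ι).indicator a i - x i) ^ 2 ≤ φ ^ 2 * ∑ i ∈ T ∪ S, (a i - x i) ^ 2 := by
  have hunion : ∑ i ∈ T ∪ S, (a i - x i) ^ 2 =
      ∑ i ∈ T, (a i - x i) ^ 2 + ∑ i ∈ S \ T, (a i - x i) ^ 2 := by
    rw [← union_sdiff_self_eq_union, sum_union disjoint_sdiff]
  have hout : ∑ i ∈ S \ T, x i ^ 2 ≤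
      φ * ∑ i ∈ S \ T, a i ^ 2 + φ ^ 2 * ∑ i ∈ S \ T, (a i - x i) ^ 2 := by
    rw [mul_sum, mul_sum, ← sum_add_distrib]
    exact sum_le_sum fun i _ => sq_le_goldenRatio_mul_sq_add_goldenRatio_sq_mul (a i) (x i)
  have hswap : ∑ i ∈ S \ T, a i ^ 2 ≤ ∑ i ∈ T \ S, a i ^ 2 :=
    sum_sdiff_le_sum_sdiff_of_forall_le (fun i => sq_nonneg _) hcard
      fun i hi j hj => sq_le_sq.mpr (hT i hi j hj)
  have hin : ∑ i ∈ T \ S, a i ^ 2 ≤ ∑ i ∈ T, (a i - x i) ^ 2 :=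
    calc ∑ i ∈ T \ S, a i ^ 2
        = ∑ i ∈ T \ S, (a i - x i) ^ 2 :=
          sum_congr rfl fun i hi => by rw [hx i (mem_sdiff.mp hi).2, sub_zero]
      _ ≤ ∑ i ∈ T, (a i - x i) ^ 2 :=
          sum_le_sum_of_subset_of_nonneg sdiff_subset fun _ _ _ => sq_nonneg _
  have hφ : φ ^ 2 * ∑ i ∈ T, (a i - x i) ^ 2 =
      ∑ i ∈ T, (a i - x i) ^ 2 + φ * ∑ i ∈ T, (a i - x i) ^ 2 := by
    rw [goldenRatio_sq]; ring
  rw [sum_sq_indicator_sub_eq hx, hunion, mul_add, hφ]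
  linarith [mul_le_mul_of_nonneg_left (hswap.trans hin) goldenRatio_pos.le]

end HardThresholding

theorem sq_max_sub_le_sq_indicator {ι : Type*} {u x : ι → ℝ} (hx0 : ∀ i, 0 ≤ x i) {T : Set ι}
    {i : ι} (hi : i ∈ T ∪ Function.support x) :
    (max (u i) 0 - x i) ^ 2 ≤
      ((Function.support (T.indicator fun i => max (u i) 0) ∪ Function.support x).indicator
        (u - x) i) ^ 2 := by
  by_cases hΩ : i ∈ Function.support (T.indicator fun i => max (u i) 0) ∪ Function.support x
  · rw [Set.indicator_of_mem hΩ, Pi.sub_apply, sq_le_sq]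
    simpa [max_eq_left (hx0 i)] using abs_max_sub_max_le_abs (u i) (x i) 0
  · simp only [Set.mem_union, Function.mem_support, not_or, not_not] at hΩ
    obtain ⟨hb, hxi⟩ := hΩ
    have hiT : i ∈ T := by simpa [hxi] using hi
    rw [Set.indicator_of_mem hiT] at hb
    rw [hb, hxi, sub_zero, zero_pow two_ne_zero]
    exact sq_nonneg _

theorem l2_le_mul_l2_of_sum_sq_le {d : ℕ} {v w : Fin d → ℝ} {c : ℝ} (hc : 0 ≤ c)
    (h : ∑ i, v i ^ 2 ≤ c ^ 2 * ∑ i, w i ^ 2) : l2 v ≤ c * l2 w := by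
  unfold l2
  rw [← sqrt_sq hc, ← sqrt_mul (sq_nonneg c)]
  exact sqrt_le_sqrt h

/-- For a nonnegative `k`-sparse `x` and arbitrary `u`,
`‖H_k(u⁺) - x‖₂ ≤ φ ‖(u - x)_Ω‖₂` where `Ω = supp(H_k(u⁺)) ∪ supp(x)`,
`u⁺` is the componentwise positive part of `u`, `H_k(u⁺) = (u⁺)_T` for an index set `T`
of `k` largest-in-magnitude entries of `u⁺` (ties broken arbitrarily),
and `φ = (√5 + 1)/2`. -/
theorem stmt9 {n k : ℕ} (x u : Fin n → ℝ) (hx0 : ∀ i, 0 ≤ x i)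
    (hx : (Function.support x).ncard ≤ k)
    (T : Set (Fin n)) (hTcard : T.ncard = min k n)
    (hT : ∀ i ∈ T, ∀ j ∉ T, |max (u j) 0| ≤ |max (u i) 0|) :
    l2 (T.indicator (fun i => max (u i) 0) - x) ≤
      (Real.sqrt 5 + 1) / 2 *
        l2 ((Function.support (T.indicator fun i => max (u i) 0) ∪
              Function.support x).indicator (u - x)) := by
  classical
  have hcard : #(Function.support x).toFinset ≤ #T.toFinset := by
    rw [← Set.ncard_eq_toFinset_card', ← Set.ncard_eq_toFinset_card', hTcard]
    exact le_min hx ((Set.ncard_le_card _).trans_eq (Nat.card_fin n))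
  have hthreshold := sum_sq_indicator_sub_le_goldenRatio_sq_mul (a := fun i => max (u i) 0)
    (fun i hi => by simpa using hi) hcard (by simpa using hT)
  have hproject : ∑ i ∈ T.toFinset ∪ (Function.support x).toFinset, (max (u i) 0 - x i) ^ 2 ≤
      ∑ i, ((Function.support (T.indicator fun i => max (u i) 0) ∪ Function.support x).indicator
        (u - x) i) ^ 2 :=
    (sum_le_sum fun i hi => sq_max_sub_le_sq_indicator hx0 (by simpa using hi)).trans
      (sum_le_univ_sum_of_nonneg fun _ => sq_nonneg _)
  rw [Set.coe_toFinset] at hthreshold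
  rw [add_comm (Real.sqrt 5)]
  exact l2_le_mul_l2_of_sum_sq_le goldenRatio_pos.le
    (hthreshold.trans (mul_le_mul_of_nonneg_left hproject (sq_nonneg _)))
end

section
/- Let σ₁ ≥ σ_m > 0, δ ≥ 0, and ε > 0 be real numbers satisfying δ + σ₁² − σ_m² < (√5 − 1)/2, and let λ satisfy σ_m² + (σ_m²/σ₁²)ε ≤ λ ≤ σ_m² + ε. Then 0 ≤ φ(δ + σ₁² − λσ₁²/(σ₁² + ε)) < 1, where φ = (√5 + 1)/2 is the golden ratio. -/
/-!
Write `t = λσ₁²/(σ₁² + ε)`. The two bounds on `λ` sandwich `σ_m² ≤ t ≤ σ₁²`, so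
`0 ≤ δ + σ₁² - t ≤ δ + σ₁² - σ_m² < (√5 - 1)/2 = φ⁻¹`, and multiplying by `φ` gives the claim.
-/

open Real goldenRatio

lemma le_mul_div_add_of_add_div_mul_le {a b ε lam : ℝ} (hb : 0 < b) (hε : 0 ≤ ε)
    (h : a + a / b * ε ≤ lam) : a ≤ lam * b / (b + ε) := by
  rw [le_div_iff₀ (by positivity)]
  calc a * (b + ε) = (a + a / b * ε) * b := by field_simp
    _ ≤ lam * b := by gcongr

lemma mul_div_add_le_of_le_add {a b ε lam : ℝ} (hb : 0 ≤ b) (hbε : 0 < b + ε)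
    (hab : a ≤ b) (h : lam ≤ a + ε) : lam * b / (b + ε) ≤ b := by
  rw [div_le_iff₀ hbε, mul_comm b]
  gcongr
  linarith

lemma sqrt_five_add_one_div_two : (√5 + 1) / 2 = φ := by
  rw [goldenRatio, add_comm]

lemma sqrt_five_sub_one_div_two : (√5 - 1) / 2 = φ⁻¹ := by
  rw [inv_goldenRatio, goldenConj]
  ring

lemma goldenRatio_mul_mem_Ico {t : ℝ} (h₀ : 0 ≤ t) (h₁ : t < φ⁻¹) : 0 ≤ φ * t ∧ φ * t < 1 :=
  ⟨mul_nonneg goldenRatio_pos.le h₀,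
    mul_inv_cancel₀ goldenRatio_ne_zero ▸ mul_lt_mul_of_pos_left h₁ goldenRatio_pos⟩

/-- Arithmetic fact for the NDRT contraction factor: if `σ₁ ≥ σ_m > 0`, `δ ≥ 0`, `ε > 0`,
`δ + σ₁² - σ_m² < (√5 - 1)/2`, and `σ_m² + (σ_m²/σ₁²)ε ≤ λ ≤ σ_m² + ε`, then
`0 ≤ φ(δ + σ₁² - λσ₁²/(σ₁² + ε)) < 1`, where `φ = (√5 + 1)/2`. -/
theorem stmt11 (σ1 σm δ ε lam : ℝ) (h1 : σm ≤ σ1) (h2 : 0 < σm) (hδ : 0 ≤ δ)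
    (hε : 0 < ε)
    (hcond : δ + σ1 ^ 2 - σm ^ 2 < (Real.sqrt 5 - 1) / 2)
    (hlam1 : σm ^ 2 + σm ^ 2 / σ1 ^ 2 * ε ≤ lam) (hlam2 : lam ≤ σm ^ 2 + ε) :
    0 ≤ (Real.sqrt 5 + 1) / 2 * (δ + σ1 ^ 2 - lam * σ1 ^ 2 / (σ1 ^ 2 + ε)) ∧
      (Real.sqrt 5 + 1) / 2 * (δ + σ1 ^ 2 - lam * σ1 ^ 2 / (σ1 ^ 2 + ε)) < 1 := by
  rw [sqrt_five_sub_one_div_two] at hcond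
  rw [sqrt_five_add_one_div_two]
  have hσ1sq : 0 < σ1 ^ 2 := by have := h2.trans_le h1; positivity
  have hlow : σm ^ 2 ≤ lam * σ1 ^ 2 / (σ1 ^ 2 + ε) :=
    le_mul_div_add_of_add_div_mul_le hσ1sq hε.le hlam1
  have hup : lam * σ1 ^ 2 / (σ1 ^ 2 + ε) ≤ σ1 ^ 2 :=
    mul_div_add_le_of_le_add hσ1sq.le (by positivity) (pow_le_pow_left₀ h2.le h1 2) hlam2
  exact goldenRatio_mul_mem_Ico (by linarith) (by linarith)
end

section
/- Let x ∈ ℝⁿ be a k-sparse vector with S := supp(x), let u ∈ ℝⁿ be arbitrary, let S′ := L_k(u) be an index set of k largest-in-magnitude entries of u, and let x′ ∈ ℝⁿ be any vector with supp(x′) ⊆ S′. Then ‖(x′ − x)_{complement of S′}‖₂ ≤ √2 · ‖(u − x)_Ω‖₂, where Ω := (S ∖ S′) ∪ (S′ ∖ S). -/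
open Finset Function

theorem l2_le_sqrt_mul_l2 {d : ℕ} {v w : Fin d → ℝ} {c : ℝ} (hc : 0 ≤ c)
    (h : ∑ i, v i ^ 2 ≤ c * ∑ i, w i ^ 2) : l2 v ≤ √c * l2 w := by
  rw [l2, l2, ← Real.sqrt_mul hc]
  exact Real.sqrt_le_sqrt h

theorem Finset.sum_le_sum_of_card_le_of_forall_le {ι α : Type*} [AddCommMonoid α] [LinearOrder α]
    [IsOrderedAddMonoid α] {s t : Finset ι} {f : ι → α} (hcard : #s ≤ #t)
    (hst : ∀ i ∈ s, ∀ j ∈ t, f i ≤ f j) (ht : ∀ j ∈ t, 0 ≤ f j) :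
    ∑ i ∈ s, f i ≤ ∑ j ∈ t, f j := by
  obtain rfl | hs := s.eq_empty_or_nonempty
  · simpa using sum_nonneg ht
  have htne : t.Nonempty := card_pos.mp (hs.card_pos.trans_le hcard)
  set m := t.inf' htne f
  calc ∑ i ∈ s, f i ≤ #s • m := sum_le_card_nsmul s f m fun i hi => le_inf' htne f (hst i hi)
    _ ≤ #t • m := nsmul_le_nsmul_left (le_inf' htne f ht) hcard
    _ ≤ ∑ j ∈ t, f j := card_nsmul_le_sum t f m fun j hj => inf'_le f hj

section

variable {ι : Type*}

theorem Finset.sum_sq_le_two_mul_of_card_le_of_abs_le {s t : Finset ι} {x u : ι → ℝ}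
    (hcard : #s ≤ #t) (hst : ∀ i ∈ s, ∀ j ∈ t, |u i| ≤ |u j|) :
    ∑ i ∈ s, x i ^ 2 ≤ 2 * (∑ i ∈ s, (u i - x i) ^ 2 + ∑ j ∈ t, u j ^ 2) :=
  calc ∑ i ∈ s, x i ^ 2
      ≤ ∑ i ∈ s, 2 * ((u i - x i) ^ 2 + u i ^ 2) :=
        sum_le_sum fun i _ => by simpa [sub_sq_comm (u i)] using add_sq_le (a := x i - u i) (b := u i)
    _ = 2 * (∑ i ∈ s, (u i - x i) ^ 2 + ∑ i ∈ s, u i ^ 2) := by rw [← sum_add_distrib, mul_sum]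
    _ ≤ 2 * (∑ i ∈ s, (u i - x i) ^ 2 + ∑ j ∈ t, u j ^ 2) := by
        gcongr 2 * (_ + ?_)
        exact sum_le_sum_of_card_le_of_forall_le hcard (fun i hi j hj => sq_le_sq.2 (hst i hi j hj))
          fun j _ => sq_nonneg _

theorem Set.ncard_sdiff_le_ncard_sdiff_of_ncard_le_min [Finite ι] {S T : Set ι} {k : ℕ}
    (hS : S.ncard ≤ k) (hT : T.ncard = min k (Nat.card ι)) : (S \ T).ncard ≤ (T \ S).ncard :=
  Iff.mp ncard_le_ncard_iff_ncard_sdiff_le_ncard_sdiff (hT ▸ le_min hS (ncard_le_card S))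

theorem Set.indicator_compl_sub_of_support_subset {x x' : ι → ℝ} {S' : Set ι}
    (hx' : support x' ⊆ S') : S'ᶜ.indicator (x' - x) = (support x \ S').indicator (-x) := by
  have hx'0 : ∀ i ∉ S', x' i = 0 := fun i hi => notMem_support.mp (mt (@hx' i) hi)
  ext i
  by_cases hi' : i ∈ S' <;> by_cases hi : i ∈ support x <;> simp_all

variable [Fintype ι]

theorem Set.sum_indicator_sq (T : Set ι) [Fintype T] (g : ι → ℝ) :
    ∑ i, T.indicator g i ^ 2 = ∑ i ∈ T.toFinset, g i ^ 2 := by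
  rw [← sum_indicator_subset (fun i => g i ^ 2) (Finset.subset_univ T.toFinset), Set.coe_toFinset]
  refine sum_congr rfl fun i _ => ?_
  by_cases hi : i ∈ T <;> simp [hi]

open Classical in
theorem sum_sq_indicator_symmDiff_support (x u : ι → ℝ) (S' : Set ι) :
    ∑ i, ((support x \ S') ∪ (S' \ support x)).indicator (u - x) i ^ 2
      = ∑ i ∈ (support x \ S').toFinset, (u i - x i) ^ 2
        + ∑ i ∈ (S' \ support x).toFinset, u i ^ 2 := by
  rw [Set.sum_indicator_sq, Set.toFinset_union,
    sum_union (Set.disjoint_toFinset.2 disjoint_sdiff_sdiff)]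
  congr 1
  exact sum_congr rfl fun i hi => by simp_all

end

/-- If `x` is `k`-sparse with `S = supp x`, `S'` is an index set of the `k`
largest-in-magnitude entries of `u`, and `supp x' ⊆ S'`, then
`‖(x' - x)_{S'ᶜ}‖₂ ≤ √2 ‖(u - x)_Ω‖₂` where `Ω = (S ∖ S') ∪ (S' ∖ S)`. -/
theorem stmt15 {n k : ℕ} (x u x' : Fin n → ℝ)
    (hx : (Function.support x).ncard ≤ k)
    (S' : Set (Fin n)) (hS'card : S'.ncard = min k n)
    (hS'max : ∀ i ∈ S', ∀ j ∉ S', |u j| ≤ |u i|)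
    (hx' : Function.support x' ⊆ S') :
    l2 (S'ᶜ.indicator (x' - x)) ≤ Real.sqrt 2 *
      l2 (((Function.support x \ S') ∪ (S' \ Function.support x)).indicator (u - x)) := by
  classical
  refine l2_le_sqrt_mul_l2 zero_le_two ?_
  rw [Set.indicator_compl_sub_of_support_subset hx', Set.sum_indicator_sq,
    sum_sq_indicator_symmDiff_support]
  simp only [Pi.neg_apply, neg_sq]
  refine sum_sq_le_two_mul_of_card_le_of_abs_le ?_ fun i hi j hj => ?_
  · simpa only [← Set.ncard_eq_toFinset_card'] using
      Set.ncard_sdiff_le_ncard_sdiff_of_ncard_le_min hx (by simpa using hS'card)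
  · simp only [Set.mem_toFinset, Set.mem_sdiff] at hi hj
    exact hS'max j hj.1 i hi.2
end

section
/- Let σ₁ ≥ σ_m > 0, ε > 0, and let 0 ≤ δ' ≤ δ be real numbers satisfying δ + σ₁² − σ_m² < 1/√3, and let λ satisfy σ_m² + (σ_m²/σ₁²)ε ≤ λ ≤ σ_m² + ε. Then 0 ≤ √(2/(1 − δ'²)) · (δ + σ₁² − λσ₁²/(σ₁² + ε)) < 1. -/
/-- Arithmetic fact for the NDRTP contraction factor: if `σ₁ ≥ σ_m > 0`, `ε > 0`,
`0 ≤ δ' ≤ δ`, `δ + σ₁² - σ_m² < 1/√3`, and `σ_m² + (σ_m²/σ₁²)ε ≤ λ ≤ σ_m² + ε`, then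
`0 ≤ √(2/(1 - δ'²))(δ + σ₁² - λσ₁²/(σ₁² + ε)) < 1`. -/
theorem stmt17 (σ1 σm ε lam δ δ' : ℝ) (h1 : σm ≤ σ1) (h2 : 0 < σm) (hε : 0 < ε)
    (hδ'0 : 0 ≤ δ') (hδ'δ : δ' ≤ δ)
    (hcond : δ + σ1 ^ 2 - σm ^ 2 < 1 / Real.sqrt 3)
    (hlam1 : σm ^ 2 + σm ^ 2 / σ1 ^ 2 * ε ≤ lam) (hlam2 : lam ≤ σm ^ 2 + ε) :
    0 ≤ Real.sqrt (2 / (1 - δ' ^ 2)) * (δ + σ1 ^ 2 - lam * σ1 ^ 2 / (σ1 ^ 2 + ε)) ∧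
      Real.sqrt (2 / (1 - δ' ^ 2)) * (δ + σ1 ^ 2 - lam * σ1 ^ 2 / (σ1 ^ 2 + ε)) < 1 := by
  have hσ1 : (0:ℝ) < σ1 := lt_of_lt_of_le h2 h1
  have hσ1sq : (0:ℝ) < σ1 ^ 2 := by positivity
  have hden : (0:ℝ) < σ1 ^ 2 + ε := by positivity
  have hsqrt3 : (0:ℝ) < Real.sqrt 3 := Real.sqrt_pos.mpr (by norm_num)
  set A := δ + σ1 ^ 2 - lam * σ1 ^ 2 / (σ1 ^ 2 + ε) with hA
  -- lower bound on the λ term: λσ1²/(σ1²+ε) ≥ σm²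
  have hkey1 : σm ^ 2 ≤ lam * σ1 ^ 2 / (σ1 ^ 2 + ε) := by
    rw [le_div_iff₀ hden]
    have : (σm ^ 2 + σm ^ 2 / σ1 ^ 2 * ε) * σ1 ^ 2 = σm ^ 2 * (σ1 ^ 2 + ε) := by
      field_simp
    nlinarith [mul_le_mul_of_nonneg_right hlam1 hσ1sq.le]
  -- upper bound: λσ1²/(σ1²+ε) ≤ σ1² (since λ ≤ σm²+ε ≤ σ1²+ε)
  have hkey2 : lam * σ1 ^ 2 / (σ1 ^ 2 + ε) ≤ σ1 ^ 2 := by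
    rw [div_le_iff₀ hden]
    have hlam : lam ≤ σ1 ^ 2 + ε := by nlinarith
    nlinarith
  have hδ0 : 0 ≤ δ := le_trans hδ'0 hδ'δ
  have hA0 : 0 ≤ A := by rw [hA]; nlinarith
  have hAlt : A < 1 / Real.sqrt 3 := by rw [hA]; nlinarith
  have hδlt : δ' < 1 / Real.sqrt 3 := by
    calc δ' ≤ δ := hδ'δ
    _ ≤ A := by rw [hA]; nlinarith
    _ < 1 / Real.sqrt 3 := hAlt
  have h3 : Real.sqrt 3 ^ 2 = 3 := Real.sq_sqrt (by norm_num)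
  have hδsq : δ' ^ 2 < 1 / 3 := by
    have := mul_lt_mul' hδlt.le hδlt hδ'0 (by positivity)
    calc δ' ^ 2 = δ' * δ' := sq δ'
    _ < (1 / Real.sqrt 3) * (1 / Real.sqrt 3) := this
    _ = 1 / 3 := by rw [div_mul_div_comm, one_mul, ← sq, h3]
  have h1δ : (2:ℝ)/3 < 1 - δ' ^ 2 := by linarith
  have hsle : Real.sqrt (2 / (1 - δ' ^ 2)) ≤ Real.sqrt 3 := by
    apply Real.sqrt_le_sqrt
    rw [div_le_iff₀ (by linarith)]
    linarith
  have hsnn : 0 ≤ Real.sqrt (2 / (1 - δ' ^ 2)) := Real.sqrt_nonneg _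
  constructor
  · exact mul_nonneg hsnn hA0
  · calc Real.sqrt (2 / (1 - δ' ^ 2)) * A ≤ Real.sqrt 3 * A :=
        mul_le_mul_of_nonneg_right hsle hA0
    _ < Real.sqrt 3 * (1 / Real.sqrt 3) := by
        exact mul_lt_mul_of_pos_left hAlt hsqrt3
    _ = 1 := mul_one_div_cancel (ne_of_gt hsqrt3)
end
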